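/- arXiv:math/0105145 — 2 statements merged into one kernel-verified Lean document; each statement's English description precedes it below -/
import Mathlib

section
/- Let H be a finite index set and let D = (D_{ij})_{i,j∈H}, G = (G_{ij})_{i,j∈H} be complex matrices with det D ≠ 0. Then there exists a unique family (Q_i(w))_{i∈H} of power series in w with constant terms 1 satisfying the finite Q-system: ∏_{j∈H} (Q_j(w))^{D_{ij}} + w_i ∏_{j∈H} (Q_j(w))^{G_{ij}} = 1 for all i ∈ H. This solution is given by Q_i(w) = ∏_{j∈H} (Q'_j(w))^{(D^{-1})_{ij}}, where (Q'_i(w))_{i∈H} is the unique solution with unit constant terms of the standard Q-system Q'_i(w) + w_i ∏_{j∈H} (Q'_j(w))^{G'_{ij}} = 1 with G' = GD^{-1}. -/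
/-- The generalized binomial coefficient `binom(a,b) = (∏_{j=0}^{b-1} (a-j)) / b!`. -/
noncomputable def binomC (a : ℂ) (b : ℕ) : ℂ :=
  (∏ j ∈ Finset.range b, (a - (j : ℂ))) / (Nat.factorial b : ℂ)

/-- The `α`-th power `f^α = exp (α · log f)` of a multivariate formal power series with
constant term `1`, defined by the (coefficientwise finite) binomial expansion
`f ^ α = Σ_k binom(α,k) (f-1)^k`. -/
noncomputable def cpow {σ : Type*} (f : MvPowerSeries σ ℂ) (α : ℂ) : MvPowerSeries σ ℂ :=
  fun N => ∑ k ∈ Finset.range (N.sum (fun _ e => e) + 1),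
    binomC α k * MvPowerSeries.coeff N ((f - 1) ^ k)

/-!
The power `f ^ α` has coefficients that are polynomial in `α`, and for `α ∈ ℕ` it is the ordinary
power. Hence the exponent laws `f ^ (α + β) = f ^ α * f ^ β`, `(f ^ α) ^ β = f ^ (α * β)` and
`(f * g) ^ α = f ^ α * g ^ α`, true for natural exponents, hold for all complex ones. For
`Q ^ A := (∏ j, Q j ^ A i j)_i` this gives `(Q ^ B) ^ A = Q ^ (A * B)`, so `Q` solves the
`(D, G)`-system iff `Q ^ D` solves the standard system with `G' = G * D⁻¹`, and `Q = (Q ^ D) ^ D⁻¹`.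
The standard system is the fixed-point equation `Q = 1 - w * Q ^ G'`, whose right-hand side
raises the order of agreement of two families by one (the factor `w_i`); it therefore has exactly
one solution, the coefficientwise limit of the iterates.
-/

open MvPowerSeries Finset

namespace QSystem

section OrderIdeal

variable {σ R : Type*} [CommRing R]

def orderIdeal (n : ℕ) : Ideal (MvPowerSeries σ R) where
  carrier := {f | (n : ℕ∞) ≤ f.order}
  zero_mem' := by simp
  add_mem' ha hb := (le_min ha hb).trans min_order_le_add
  smul_mem' c _ hf := hf.trans <| le_add_self.trans le_order_mul

theorem mem_orderIdeal {n : ℕ} {f : MvPowerSeries σ R} :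
    f ∈ orderIdeal n ↔ ∀ d, d.degree < n → coeff d f = 0 :=
  ⟨fun hf _ hd => coeff_of_lt_order <| (Nat.cast_lt.mpr hd).trans_le hf, nat_le_order⟩

theorem orderIdeal_zero : orderIdeal 0 = (⊤ : Ideal (MvPowerSeries σ R)) :=
  eq_top_iff.mpr fun f _ => by simp [orderIdeal]

theorem orderIdeal_antitone : Antitone (orderIdeal : ℕ → Ideal (MvPowerSeries σ R)) :=
  fun _ _ hmn f hf => show _ ≤ f.order from (Nat.cast_le.mpr hmn).trans hf

variable {n : ℕ} {f g : MvPowerSeries σ R}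

theorem coeff_eq_of_smodEq (h : f ≡ g [SMOD orderIdeal n]) {d : σ →₀ ℕ} (hd : d.degree < n) :
    coeff d f = coeff d g :=
  sub_eq_zero.mp <| by rw [← map_sub]; exact mem_orderIdeal.mp (SModEq.sub_mem.mp h) d hd

theorem smodEq_of_coeff_eq (h : ∀ d, d.degree < n → coeff d f = coeff d g) :
    f ≡ g [SMOD orderIdeal n] :=
  SModEq.sub_mem.mpr <| mem_orderIdeal.mpr fun d hd => by rw [map_sub, h d hd, sub_self]

theorem eq_of_forall_smodEq (h : ∀ n, f ≡ g [SMOD orderIdeal n]) : f = g :=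
  ext fun d => coeff_eq_of_smodEq (h (d.degree + 1)) (Nat.lt_succ_self _)

theorem X_mul_smodEq (i : σ) (h : f ≡ g [SMOD orderIdeal n]) :
    X i * f ≡ X i * g [SMOD orderIdeal (n + 1)] := by
  rw [SModEq.sub_mem, ← mul_sub]
  have hX : (1 : ℕ∞) ≤ (X i : MvPowerSeries σ R).order :=
    one_le_order_iff_constCoeff_eq_zero.mpr (constantCoeff_X i)
  have hfg : (n : ℕ∞) ≤ (f - g).order := SModEq.sub_mem.mp h
  show ((n + 1 : ℕ) : ℕ∞) ≤ _
  calc ((n + 1 : ℕ) : ℕ∞) = 1 + n := by push_cast; ring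
    _ ≤ _ := (add_le_add hX hfg).trans le_order_mul

end OrderIdeal

section FixedPoint

variable {ι σ R : Type*} [CommRing R]

def IsContracting (Φ : (ι → MvPowerSeries σ R) → ι → MvPowerSeries σ R) : Prop :=
  ∀ n P P', (∀ i, P i ≡ P' i [SMOD orderIdeal n]) →
    ∀ i, Φ P i ≡ Φ P' i [SMOD orderIdeal (n + 1)]

variable {Φ : (ι → MvPowerSeries σ R) → ι → MvPowerSeries σ R}

theorem IsContracting.eq_of_isFixedPt (hΦ : IsContracting Φ) {P P' : ι → MvPowerSeries σ R}
    (hP : Function.IsFixedPt Φ P) (hP' : Function.IsFixedPt Φ P') : P = P' := by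
  have h : ∀ n i, P i ≡ P' i [SMOD orderIdeal n] := by
    intro n
    induction n with
    | zero => simp [orderIdeal_zero, SModEq.top]
    | succ n ih => rw [← hP, ← hP']; exact hΦ n P P' ih
  exact funext fun i => eq_of_forall_smodEq fun n => h n i

theorem IsContracting.iterate_smodEq_of_le (hΦ : IsContracting Φ) (P : ι → MvPowerSeries σ R)
    {k m : ℕ} (hkm : k ≤ m) (i : ι) : Φ^[k] P i ≡ Φ^[m] P i [SMOD orderIdeal k] := by
  have step : ∀ k i, Φ^[k] P i ≡ Φ^[k + 1] P i [SMOD orderIdeal k] := by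
    intro k
    induction k with
    | zero => simp [orderIdeal_zero, SModEq.top]
    | succ k ih =>
      rw [Function.iterate_succ_apply', Function.iterate_succ_apply' Φ (k + 1)]
      exact hΦ k _ _ ih
  induction m, hkm using Nat.le_induction with
  | base => exact SModEq.rfl
  | succ m hkm ih => exact ih.trans ((step m i).mono (orderIdeal_antitone hkm))

theorem IsContracting.exists_isFixedPt (hΦ : IsContracting Φ) :
    ∃ P, Function.IsFixedPt Φ P := by
  let u : ℕ → ι → MvPowerSeries σ R := fun k => Φ^[k] 0
  -- the coefficient of `d` in the iterates is constant from step `d.degree + 1` on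
  let L : ι → MvPowerSeries σ R := fun i d => coeff d (u (d.degree + 1) i)
  have hL : ∀ k i, L i ≡ u k i [SMOD orderIdeal k] := fun k i =>
    smodEq_of_coeff_eq fun d hd =>
      coeff_eq_of_smodEq (hΦ.iterate_smodEq_of_le 0 hd i) (Nat.lt_succ_self _)
  refine ⟨L, funext fun i => eq_of_forall_smodEq fun k => ?_⟩
  have h : Φ L i ≡ L i [SMOD orderIdeal (k + 1)] := by
    have := hΦ k L (u k) (hL k) i
    rw [← Function.iterate_succ_apply' Φ k 0] at this
    exact this.trans (hL (k + 1) i).symm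
  exact h.mono (orderIdeal_antitone k.le_succ)

end FixedPoint

section Cpow

variable {σ : Type*} {f g : MvPowerSeries σ ℂ}

theorem coeff_cpow (α : ℂ) (N : σ →₀ ℕ) :
    coeff N (cpow f α) = ∑ k ∈ range (N.degree + 1), binomC α k * coeff N ((f - 1) ^ k) := rfl

theorem binomC_eq_eval_descPochhammer (α : ℂ) (k : ℕ) :
    binomC α k = (descPochhammer ℂ k).eval α / k.factorial := by
  rw [binomC, descPochhammer_eval_eq_prod_range]

theorem binomC_natCast (n k : ℕ) : binomC n k = n.choose k := by
  rw [binomC_eq_eval_descPochhammer, Nat.cast_choose_eq_descPochhammer_div]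

theorem constantCoeff_cpow (α : ℂ) : constantCoeff (cpow f α) = 1 := by
  rw [← coeff_zero_eq_constantCoeff_apply, coeff_cpow]
  simp [binomC]

theorem cpow_smodEq {n : ℕ} (h : f ≡ g [SMOD orderIdeal n]) (α : ℂ) :
    cpow f α ≡ cpow g α [SMOD orderIdeal n] :=
  smodEq_of_coeff_eq fun N hN => by
    simp only [coeff_cpow]
    exact sum_congr rfl fun k _ => by
      rw [coeff_eq_of_smodEq ((h.sub SModEq.rfl).pow k) hN]

theorem coeff_pow_eq_zero_of_degree_lt (hg : constantCoeff g = 0) {k : ℕ} {N : σ →₀ ℕ}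
    (hN : N.degree < k) : coeff N (g ^ k) = 0 :=
  coeff_of_lt_order <| (Nat.cast_lt.mpr hN).trans_le (le_order_pow_of_constantCoeff_eq_zero k hg)

theorem coeff_cpow_eq_sum_of_degree_le (hf : constantCoeff f = 1) (α : ℂ) {N : σ →₀ ℕ} {m : ℕ}
    (hm : N.degree ≤ m) :
    coeff N (cpow f α) = ∑ k ∈ range (m + 1), binomC α k * coeff N ((f - 1) ^ k) := by
  rw [coeff_cpow]
  refine sum_subset (range_subset_range.mpr (by omega)) fun k _ hk => ?_
  rw [coeff_pow_eq_zero_of_degree_lt (by simp [hf]) (by simpa using hk), mul_zero]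

theorem cpow_natCast (hf : constantCoeff f = 1) (n : ℕ) : cpow f n = f ^ n := by
  ext N
  have hpow : f ^ n = ∑ k ∈ range (n + N.degree + 1), (n.choose k : ℂ) • (f - 1) ^ k := by
    rw [← sum_subset (range_subset_range.mpr (by omega : n + 1 ≤ n + N.degree + 1))
      fun k _ hk => by rw [Nat.choose_eq_zero_of_lt (by simpa using hk), Nat.cast_zero, zero_smul]]
    conv_lhs => rw [← sub_add_cancel f 1, add_pow]
    simp [Nat.cast_smul_eq_nsmul, nsmul_eq_mul, mul_comm]
  rw [coeff_cpow_eq_sum_of_degree_le hf _ (by omega : N.degree ≤ n + N.degree), hpow, map_sum]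
  simp [binomC_natCast]

end Cpow

section PolynomialIdentity

variable {σ : Type*}

def HasPolynomialCoeffs (F : ℂ → MvPowerSeries σ ℂ) : Prop :=
  ∀ N, ∃ p : Polynomial ℂ, ∀ α, coeff N (F α) = p.eval α

theorem hasPolynomialCoeffs_const (f : MvPowerSeries σ ℂ) :
    HasPolynomialCoeffs fun _ => f :=
  fun N => ⟨Polynomial.C (coeff N f), fun _ => by simp⟩

theorem hasPolynomialCoeffs_cpow (f : MvPowerSeries σ ℂ) :
    HasPolynomialCoeffs (cpow f) := fun N =>
  ⟨∑ k ∈ range (N.degree + 1),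
    Polynomial.C (coeff N ((f - 1) ^ k) / (k.factorial : ℂ)) * descPochhammer ℂ k, fun α => by
    simp only [coeff_cpow, Polynomial.eval_finsetSum, Polynomial.eval_mul, Polynomial.eval_C,
      binomC_eq_eval_descPochhammer]
    exact sum_congr rfl fun k _ => by ring⟩

namespace HasPolynomialCoeffs

variable {F G : ℂ → MvPowerSeries σ ℂ}

theorem mul (hF : HasPolynomialCoeffs F) (hG : HasPolynomialCoeffs G) :
    HasPolynomialCoeffs fun α => F α * G α := by
  classical
  choose p hp using hF
  choose q hq using hG
  exact fun N => ⟨∑ d ∈ antidiagonal N, p d.1 * q d.2, fun α => by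
    simp [coeff_mul, Polynomial.eval_finsetSum, hp, hq]⟩

theorem comp (hF : HasPolynomialCoeffs F) (q : Polynomial ℂ) {g : ℂ → ℂ}
    (hg : ∀ α, q.eval α = g α) : HasPolynomialCoeffs fun α => F (g α) := by
  choose p hp using hF
  exact fun N => ⟨(p N).comp q, fun α => by rw [Polynomial.eval_comp, hg, hp]⟩

theorem eq_of_forall_natCast (hF : HasPolynomialCoeffs F) (hG : HasPolynomialCoeffs G)
    (h : ∀ n : ℕ, F n = G n) : F = G := by
  funext α
  ext N
  obtain ⟨p, hp⟩ := hF N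
  obtain ⟨q, hq⟩ := hG N
  suffices p = q by rw [hp, hq, this]
  refine Polynomial.eq_of_infinite_eval_eq p q <|
    (Set.infinite_range_of_injective Nat.cast_injective).mono ?_
  rintro _ ⟨n, rfl⟩
  change p.eval _ = q.eval _
  rw [← hp, ← hq, h n]

end HasPolynomialCoeffs

end PolynomialIdentity

section CpowLaws

variable {σ : Type*} {f g : MvPowerSeries σ ℂ}

theorem cpow_zero (hf : constantCoeff f = 1) : cpow f 0 = 1 := by
  simpa using cpow_natCast hf 0

theorem cpow_one (hf : constantCoeff f = 1) : cpow f 1 = f := by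
  simpa using cpow_natCast hf 1

theorem one_cpow (α : ℂ) : cpow (1 : MvPowerSeries σ ℂ) α = 1 :=
  congrFun ((hasPolynomialCoeffs_cpow 1).eq_of_forall_natCast (hasPolynomialCoeffs_const 1)
    fun n => by rw [cpow_natCast (map_one _), one_pow]) α

theorem cpow_add (hf : constantCoeff f = 1) (α β : ℂ) :
    cpow f (α + β) = cpow f α * cpow f β := by
  have hnat (n : ℕ) (β : ℂ) : cpow f (n + β) = cpow f n * cpow f β := by
    have hF : HasPolynomialCoeffs fun β => cpow f (n + β) :=
      (hasPolynomialCoeffs_cpow f).comp (.C (n : ℂ) + .X) fun _ => by simp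
    refine congrFun (hF.eq_of_forall_natCast
      ((hasPolynomialCoeffs_const _).mul (hasPolynomialCoeffs_cpow f)) fun m => ?_) β
    rw [← Nat.cast_add, cpow_natCast hf, cpow_natCast hf, cpow_natCast hf, pow_add]
  have hF : HasPolynomialCoeffs fun α => cpow f (α + β) :=
    (hasPolynomialCoeffs_cpow f).comp (.X + .C β) fun _ => by simp
  exact congrFun (hF.eq_of_forall_natCast
    ((hasPolynomialCoeffs_cpow f).mul (hasPolynomialCoeffs_const _)) fun n => hnat n β) α

theorem cpow_natCast_mul (hf : constantCoeff f = 1) (n : ℕ) (α : ℂ) :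
    cpow f (n * α) = cpow f α ^ n := by
  induction n with
  | zero => simpa using cpow_zero hf
  | succ n ih => rw [Nat.cast_succ, add_one_mul, cpow_add hf, ih, pow_succ]

theorem cpow_cpow (hf : constantCoeff f = 1) (α β : ℂ) :
    cpow (cpow f α) β = cpow f (α * β) :=
  have hG : HasPolynomialCoeffs fun β => cpow f (α * β) :=
    (hasPolynomialCoeffs_cpow f).comp (.C α * .X) fun _ => by simp
  congrFun ((hasPolynomialCoeffs_cpow _).eq_of_forall_natCast hG fun n => by
      rw [cpow_natCast (constantCoeff_cpow α), mul_comm, cpow_natCast_mul hf]) β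

theorem mul_cpow (hf : constantCoeff f = 1) (hg : constantCoeff g = 1) (α : ℂ) :
    cpow (f * g) α = cpow f α * cpow g α :=
  congrFun ((hasPolynomialCoeffs_cpow _).eq_of_forall_natCast
    ((hasPolynomialCoeffs_cpow f).mul (hasPolynomialCoeffs_cpow g)) fun n => by
      rw [cpow_natCast (by simp [hf, hg]), cpow_natCast hf, cpow_natCast hg, mul_pow]) α

theorem prod_cpow {ι : Type*} (s : Finset ι) {F : ι → MvPowerSeries σ ℂ}
    (hF : ∀ i ∈ s, constantCoeff (F i) = 1) (α : ℂ) :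
    cpow (∏ i ∈ s, F i) α = ∏ i ∈ s, cpow (F i) α := by
  classical
  induction s using Finset.induction_on with
  | empty => simp [one_cpow]
  | insert a s ha ih =>
    have hs : ∀ i ∈ s, constantCoeff (F i) = 1 := fun i hi => hF i (mem_insert_of_mem hi)
    rw [prod_insert ha, prod_insert ha, mul_cpow (hF a (mem_insert_self a s))
      (by rw [map_prod]; exact prod_eq_one hs), ih hs]

theorem cpow_sum (hf : constantCoeff f = 1) {ι : Type*} (s : Finset ι) (c : ι → ℂ) :
    cpow f (∑ i ∈ s, c i) = ∏ i ∈ s, cpow f (c i) := by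
  classical
  induction s using Finset.induction_on with
  | empty => simp [cpow_zero hf]
  | insert a s ha ih => rw [sum_insert ha, prod_insert ha, cpow_add hf, ih]

end CpowLaws

section MatrixCpow

variable {σ ι κ μ : Type*} [Fintype ι]

noncomputable def matrixCpow (Q : ι → MvPowerSeries σ ℂ) (A : Matrix κ ι ℂ) (k : κ) : MvPowerSeries σ ℂ :=
  ∏ j, cpow (Q j) (A k j)

theorem constantCoeff_matrixCpow (Q : ι → MvPowerSeries σ ℂ) (A : Matrix κ ι ℂ) (k : κ) :
    constantCoeff (matrixCpow Q A k) = 1 := by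
  rw [matrixCpow, map_prod]
  exact prod_eq_one fun j _ => constantCoeff_cpow _

variable {Q : ι → MvPowerSeries σ ℂ}

theorem matrixCpow_smodEq {Q' : ι → MvPowerSeries σ ℂ} {n : ℕ}
    (h : ∀ j, Q j ≡ Q' j [SMOD orderIdeal n]) (A : Matrix κ ι ℂ) (k : κ) :
    matrixCpow Q A k ≡ matrixCpow Q' A k [SMOD orderIdeal n] :=
  SModEq.prod fun j _ => cpow_smodEq (h j) _

theorem matrixCpow_matrixCpow [Fintype μ] (hQ : ∀ j, constantCoeff (Q j) = 1)
    (A : Matrix κ μ ℂ) (B : Matrix μ ι ℂ) :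
    matrixCpow (matrixCpow Q B) A = matrixCpow Q (A * B) := by
  funext k
  calc ∏ l, cpow (∏ j, cpow (Q j) (B l j)) (A k l)
      = ∏ l, ∏ j, cpow (Q j) (B l j * A k l) := prod_congr rfl fun l _ => by
        rw [prod_cpow _ fun j _ => constantCoeff_cpow _]
        exact prod_congr rfl fun j _ => cpow_cpow (hQ j) _ _
    _ = ∏ j, ∏ l, cpow (Q j) (A k l * B l j) := by
        rw [prod_comm]; simp only [mul_comm]
    _ = ∏ j, cpow (Q j) ((A * B) k j) := prod_congr rfl fun j _ => by
        rw [Matrix.mul_apply, cpow_sum (hQ j)]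

theorem matrixCpow_one [DecidableEq ι] (hQ : ∀ j, constantCoeff (Q j) = 1) :
    matrixCpow Q (1 : Matrix ι ι ℂ) = Q := by
  funext i
  rw [matrixCpow, prod_eq_single i (fun j _ hj => by rw [Matrix.one_apply_ne' hj, cpow_zero (hQ j)])
    (by simp), Matrix.one_apply_eq, cpow_one (hQ i)]

end MatrixCpow

section Solutions

variable {H : Type*} [Fintype H]

noncomputable def standardQMap (G' : Matrix H H ℂ) (Q : H → MvPowerSeries H ℂ) :
    H → MvPowerSeries H ℂ :=
  fun i => 1 - X i * matrixCpow Q G' i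

theorem isContracting_standardQMap (G' : Matrix H H ℂ) : IsContracting (standardQMap G') :=
  fun _ _ _ h i => SModEq.rfl.sub (X_mul_smodEq i (matrixCpow_smodEq h G' i))

theorem isFixedPt_standardQMap_iff {G' : Matrix H H ℂ} {Q : H → MvPowerSeries H ℂ} :
    Function.IsFixedPt (standardQMap G') Q ↔ ∀ i, Q i + X i * matrixCpow Q G' i = 1 := by
  simp only [Function.IsFixedPt, funext_iff, standardQMap, sub_eq_iff_eq_add]
  exact forall_congr' fun _ => eq_comm

theorem existsUnique_standardQSystem (G' : Matrix H H ℂ) :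
    ∃! Q : H → MvPowerSeries H ℂ, ∀ i, Q i + X i * matrixCpow Q G' i = 1 := by
  obtain ⟨Q, hQ⟩ := (isContracting_standardQMap G').exists_isFixedPt
  exact ⟨Q, isFixedPt_standardQMap_iff.mp hQ, fun Q' hQ' =>
    (isContracting_standardQMap G').eq_of_isFixedPt (isFixedPt_standardQMap_iff.mpr hQ') hQ⟩

theorem constantCoeff_of_standardQSystem {G' : Matrix H H ℂ} {Q : H → MvPowerSeries H ℂ}
    (hQ : ∀ i, Q i + X i * matrixCpow Q G' i = 1) (i : H) : constantCoeff (Q i) = 1 := by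
  simpa using congrArg constantCoeff (hQ i)

variable [DecidableEq H] {D G : Matrix H H ℂ}

theorem standardQSystem_matrixCpow (hD : D⁻¹ * D = 1) {Q : H → MvPowerSeries H ℂ}
    (hQ : ∀ j, constantCoeff (Q j) = 1)
    (hsys : ∀ i, matrixCpow Q D i + X i * matrixCpow Q G i = 1) (i : H) :
    matrixCpow Q D i + X i * matrixCpow (matrixCpow Q D) (G * D⁻¹) i = 1 := by
  rw [matrixCpow_matrixCpow hQ, Matrix.mul_assoc, hD, Matrix.mul_one]
  exact hsys i

theorem qSystem_matrixCpow_inv (hD : D * D⁻¹ = 1) {Q' : H → MvPowerSeries H ℂ}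
    (hQ' : ∀ i, Q' i + X i * matrixCpow Q' (G * D⁻¹) i = 1) (i : H) :
    matrixCpow (matrixCpow Q' D⁻¹) D i + X i * matrixCpow (matrixCpow Q' D⁻¹) G i = 1 := by
  have hc := constantCoeff_of_standardQSystem hQ'
  rw [matrixCpow_matrixCpow hc, matrixCpow_matrixCpow hc, hD, matrixCpow_one hc]
  exact hQ' i

theorem eq_matrixCpow_inv_of_qSystem (hD : D⁻¹ * D = 1) {Q' Q : H → MvPowerSeries H ℂ}
    (hQ' : ∀ i, Q' i + X i * matrixCpow Q' (G * D⁻¹) i = 1)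
    (hQ : ∀ j, constantCoeff (Q j) = 1)
    (hsys : ∀ i, matrixCpow Q D i + X i * matrixCpow Q G i = 1) :
    Q = matrixCpow Q' D⁻¹ := by
  have hQD : matrixCpow Q D = Q' :=
    (existsUnique_standardQSystem (G * D⁻¹)).unique (standardQSystem_matrixCpow hD hQ hsys) hQ'
  rw [← hQD, matrixCpow_matrixCpow hQ, hD, matrixCpow_one hQ]

end Solutions

end QSystem

open QSystem

/-- For a finite index set `H` and complex matrices `D, G` with
`det D ≠ 0`, the finite `Q`-system `∏_j Q_j^{D_{ij}} + w_i ∏_j Q_j^{G_{ij}} = 1` has a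
unique solution among families of power series with unit constant terms, and it is given by
`Q_i = ∏_j (Q'_j)^{(D⁻¹)_{ij}}` in terms of the unique solution `Q'` of the standard
`Q`-system with matrix `G' = G D⁻¹`. -/
theorem statement1 {H : Type*} [Fintype H] [DecidableEq H]
    (D G : Matrix H H ℂ) (hD : D.det ≠ 0) :
    (∃! Q : H → MvPowerSeries H ℂ,
      (∀ i, MvPowerSeries.constantCoeff (Q i) = 1) ∧
      (∀ i, (∏ j, cpow (Q j) (D i j)) +
        MvPowerSeries.X i * ∏ j, cpow (Q j) (G i j) = 1)) ∧
    (∀ Q' : H → MvPowerSeries H ℂ,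
      (∀ i, MvPowerSeries.constantCoeff (Q' i) = 1) →
      (∀ i, Q' i + MvPowerSeries.X i * ∏ j, cpow (Q' j) ((G * D⁻¹) i j) = 1) →
      ∀ Q : H → MvPowerSeries H ℂ,
        (∀ i, MvPowerSeries.constantCoeff (Q i) = 1) →
        (∀ i, (∏ j, cpow (Q j) (D i j)) +
          MvPowerSeries.X i * ∏ j, cpow (Q j) (G i j) = 1) →
        ∀ i, Q i = ∏ j, cpow (Q' j) (D⁻¹ i j)) := by
  have hDu : IsUnit D.det := isUnit_iff_ne_zero.mpr hD
  have formula : ∀ Q' : H → MvPowerSeries H ℂ,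
      (∀ i, Q' i + X i * matrixCpow Q' (G * D⁻¹) i = 1) → ∀ Q : H → MvPowerSeries H ℂ,
      (∀ i, constantCoeff (Q i) = 1) → (∀ i, matrixCpow Q D i + X i * matrixCpow Q G i = 1) →
      Q = matrixCpow Q' D⁻¹ := fun Q' hQ' Q hQ hsys =>
    eq_matrixCpow_inv_of_qSystem (D.nonsing_inv_mul hDu) hQ' hQ hsys
  obtain ⟨S, hS, -⟩ := existsUnique_standardQSystem (G * D⁻¹)
  refine ⟨⟨matrixCpow S D⁻¹, ⟨constantCoeff_matrixCpow S D⁻¹,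
      qSystem_matrixCpow_inv (D.mul_nonsing_inv hDu) hS⟩,
    fun Q ⟨hQ, hsys⟩ => formula S hS Q hQ hsys⟩, ?_⟩
  exact fun Q' _ hQ' Q hQ hsys => congrFun (formula Q' hQ' Q hQ hsys)
end

section
/- Let H be a finite index set, D, G complex matrices of size |H| with det D ≠ 0, and let (Q_i(w))_{i∈H} be the unique solution of the Q-system ∏_{j∈H} Q_j(w)^{D_{ij}} + w_i ∏_{j∈H} Q_j(w)^{G_{ij}} = 1. For ν ∈ ℂ^H set Q^ν_{D,G}(w) = ∏_{i∈H} (Q_i(w))^{ν_i}. Then Q^ν_{D,G}(w) · K^0_{D,G}(w) = K^ν_{D,G}(w) as formal power series (equivalently, Q^ν_{D,G}(w) = K^ν_{D,G}(w)/K^0_{D,G}(w)). -/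
/-- `P_i(D,G;ν,N) = -Σ_j ν_j (D⁻¹)_{ji} - Σ_j N_j (G D⁻¹)_{ji}`. -/
noncomputable def Pfin {H : Type*} [Fintype H] [DecidableEq H]
    (D G : Matrix H H ℂ) (ν : H → ℂ) (N : H →₀ ℕ) (i : H) : ℂ :=
  -(∑ j, ν j * D⁻¹ j i) - ∑ j, (N j : ℂ) * (G * D⁻¹) j i

/-- The power series `K^ν_{D,G}(w) = Σ_N (∏_{i∈H(N)} binom(P_i+N_i, N_i)) w^N`. -/
noncomputable def Kfin {H : Type*} [Fintype H] [DecidableEq H]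
    (D G : Matrix H H ℂ) (ν : H → ℂ) : MvPowerSeries H ℂ :=
  fun N => ∏ i ∈ N.support, binomC (Pfin D G ν N i + (N i : ℂ)) (N i)

/-- `F_{ij}(D,G;ν,N) = δ_{ij} P_j + (G D⁻¹)_{ij} N_j`. -/
noncomputable def Ffin {H : Type*} [Fintype H] [DecidableEq H]
    (D G : Matrix H H ℂ) (ν : H → ℂ) (N : H →₀ ℕ) (i j : H) : ℂ :=
  (if i = j then Pfin D G ν N j else 0) + (G * D⁻¹) i j * (N j : ℂ)

/-- The power series
`R^ν_{D,G}(w) = Σ_N (det_{H(N)} F) (∏_{i∈H(N)} (1/N_i) binom(P_i+N_i-1, N_i-1)) w^N`. -/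
noncomputable def Rfin {H : Type*} [Fintype H] [DecidableEq H]
    (D G : Matrix H H ℂ) (ν : H → ℂ) : MvPowerSeries H ℂ :=
  fun N =>
    (Matrix.det (Matrix.of fun i j : N.support => Ffin D G ν N i j)) *
      ∏ i ∈ N.support, (1 / (N i : ℂ)) * binomC (Pfin D G ν N i + (N i : ℂ) - 1) (N i - 1)

/-!
Both `μ ↦ Q^μ · K^0` and `μ ↦ K^μ` satisfy `F (μ + Dᵢ) = F μ - wᵢ · F (μ + Gᵢ)`: for the first
this is the `Q`-system, for the second Pascal's rule in the `i`-th factor. Their difference `E`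
vanishes at `μ = 0`. By induction on `N`, the `N`-th coefficient of `E μ` is invariant under
`μ ↦ μ + Dᵢ`; it is a polynomial in `μ` along every line, so it is invariant under the span of the
rows of `D`, which is everything since `det D ≠ 0`. Hence it equals its value at `0`, namely `0`.
-/

section PolynomialFunctions

variable {K : Type*} [Field K]

def polyFun (K : Type*) [Field K] : Subalgebra K (K → K) := Algebra.adjoin K {id}

theorem mem_polyFun_iff {f : K → K} :
    f ∈ polyFun K ↔ ∃ p : Polynomial K, ∀ x, f x = p.eval x := by
  simp only [polyFun, Algebra.adjoin_singleton_eq_range_aeval, AlgHom.mem_range, funext_iff,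
    Polynomial.aeval_fn_apply, id, Polynomial.coe_aeval_eq_eval, eq_comm]

theorem id_mem_polyFun : (id : K → K) ∈ polyFun K := Algebra.self_mem_adjoin_singleton K _

theorem const_mem_polyFun (c : K) : (fun _ => c : K → K) ∈ polyFun K :=
  (polyFun K).algebraMap_mem c

theorem affine_mem_polyFun (a b : K) : (fun t => a + t * b) ∈ polyFun K :=
  add_mem (const_mem_polyFun a) (mul_mem id_mem_polyFun (const_mem_polyFun b))

theorem eval_comp_mem_polyFun (p : Polynomial K) {g : K → K} (hg : g ∈ polyFun K) :
    (fun t => p.eval (g t)) ∈ polyFun K := by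
  have : (fun t => p.eval (g t)) = Polynomial.aeval g p := by
    funext t
    simp [Polynomial.aeval_fn_apply]
  rw [this]
  exact Algebra.adjoin_le (Set.singleton_subset_iff.mpr hg)
    (Polynomial.aeval_mem_adjoin_singleton K g)

variable [CharZero K]

theorem polyFun_eq_zero_of_natCast {f : K → K} (hf : f ∈ polyFun K) (h : ∀ n : ℕ, f n = 0) :
    f = 0 := by
  obtain ⟨p, hp⟩ := mem_polyFun_iff.mp hf
  have hp0 : p = 0 := Polynomial.eq_zero_of_infinite_isRoot p <|
    Set.infinite_of_injective_forall_mem Nat.cast_injective fun n => by simp [← hp, h]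
  funext x
  simp [hp, hp0]

theorem polyFun_eq_of_natCast {f g : K → K} (hf : f ∈ polyFun K) (hg : g ∈ polyFun K)
    (h : ∀ n : ℕ, f n = g n) : f = g :=
  sub_eq_zero.mp <| polyFun_eq_zero_of_natCast (sub_mem hf hg) fun n => sub_eq_zero.mpr (h n)

theorem polyFun_eq_const_of_periodic {f : K → K} (hf : f ∈ polyFun K)
    (h : Function.Periodic f 1) : f = fun _ => f 0 :=
  polyFun_eq_of_natCast hf (const_mem_polyFun _) fun n => by simpa using h.nat_mul_eq n

theorem apply_add_eq_of_mem_span {V : Type*} [AddCommGroup V] [Module K V] {g : V → K}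
    (hg : ∀ μ v, (fun t : K => g (μ + t • v)) ∈ polyFun K) {S : Set V}
    (hS : ∀ μ, ∀ v ∈ S, g (μ + v) = g μ) {w : V} (hw : w ∈ Submodule.span K S) (μ : V) :
    g (μ + w) = g μ := by
  suffices ∀ μ (t : K), g (μ + t • w) = g μ by simpa using this μ 1
  induction hw using Submodule.span_induction with
  | mem v hv =>
    intro μ t
    have hper : Function.Periodic (fun t : K => g (μ + t • v)) 1 := fun t => by
      simpa [add_smul, add_assoc] using hS (μ + t • v) v hv
    simpa using congrFun (polyFun_eq_const_of_periodic (hg μ v) hper) t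
  | zero => simp
  | add x y _ _ hx hy => intro μ t; rw [smul_add, ← add_assoc, hy, hx]
  | smul a x _ hx => intro μ t; rw [smul_smul, hx]

end PolynomialFunctions

section PolyCoeffFamilies

open MvPowerSeries

def polyCoeffFamilies (σ K : Type*) [Field K] : Subalgebra K (K → MvPowerSeries σ K) where
  carrier := {F | ∀ N, (fun t => coeff N (F t)) ∈ polyFun K}
  mul_mem' {F G} hF hG N := by
    classical
    simp only [Pi.mul_apply, coeff_mul]
    rw [← Finset.sum_fn]
    exact Subalgebra.sum_mem _ fun p _ => mul_mem (hF p.1) (hG p.2)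
  add_mem' hF hG N := add_mem (hF N) (hG N)
  algebraMap_mem' c N := by
    classical
    simpa [Pi.algebraMap_apply, coeff_C] using const_mem_polyFun _

variable {σ K : Type*} [Field K]

theorem const_mem_polyCoeffFamilies (f : MvPowerSeries σ K) :
    (fun _ => f : K → MvPowerSeries σ K) ∈ polyCoeffFamilies σ K :=
  fun _ => const_mem_polyFun _

theorem polyCoeffFamilies_eq_of_natCast [CharZero K] {F G : K → MvPowerSeries σ K}
    (hF : F ∈ polyCoeffFamilies σ K) (hG : G ∈ polyCoeffFamilies σ K) (h : ∀ n : ℕ, F n = G n) :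
    F = G :=
  funext fun t => MvPowerSeries.ext fun N =>
    congrFun (polyFun_eq_of_natCast (hF N) (hG N) fun n => by simp only [h]) t

theorem MvPowerSeries.coeff_X_mul {R : Type*} [Semiring R] (i : σ) (f : MvPowerSeries σ R)
    (N : σ →₀ ℕ) :
    coeff N (X i * f) =
      if Finsupp.single i 1 ≤ N then coeff (N - Finsupp.single i 1) f else 0 := by
  rw [X_def, coeff_monomial_mul, one_mul]

theorem eq_zero_of_add_row_eq_sub_X_mul [CharZero K] [Fintype σ] [DecidableEq σ]
    {D G : Matrix σ σ K} (hD : IsUnit D) {E : (σ → K) → MvPowerSeries σ K}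
    (hrec : ∀ μ i, E (μ + D i) = E μ - X i * E (μ + G i))
    (hline : ∀ μ v, (fun t : K => E (μ + t • v)) ∈ polyCoeffFamilies σ K) (h0 : E 0 = 0) :
    E = 0 := by
  have hspan : Submodule.span K (Set.range D.row) = ⊤ := by
    rw [← range_vecMulLinear, LinearMap.range_eq_top]
    exact Matrix.vecMul_surjective_iff_isUnit.mpr hD
  suffices ∀ N μ, coeff N (E μ) = 0 from funext fun μ => MvPowerSeries.ext fun N => this N μ
  intro N
  induction N using WellFoundedLT.induction with
  | _ N ih =>
  have hper : ∀ μ i, coeff N (E (μ + D i)) = coeff N (E μ) := by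
    intro μ i
    rw [hrec, map_sub, coeff_X_mul, sub_eq_self]
    split_ifs with h
    · have hpos : 0 < Finsupp.single i 1 := pos_iff_ne_zero.mpr (by simp)
      refine ih _ ?_ _
      calc N - Finsupp.single i 1 < N - Finsupp.single i 1 + Finsupp.single i 1 :=
            lt_add_of_pos_right _ hpos
        _ = N := tsub_add_cancel_of_le h
    · rfl
  intro μ
  simpa [h0] using apply_add_eq_of_mem_span (g := fun μ => coeff N (E μ))
    (fun μ v => hline μ v N) (by rintro μ _ ⟨i, rfl⟩; exact hper μ i)
    (hspan ▸ Submodule.mem_top) 0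

end PolyCoeffFamilies

theorem binomC_eq_choose (a : ℂ) (k : ℕ) : binomC a k = Ring.choose a k := by
  rw [Ring.choose_eq_smul, binomC, ← descPochhammer_eval_eq_prod_range, smul_eq_mul,
    div_eq_inv_mul, ← descPochhammer_map (algebraMap ℤ ℂ), Polynomial.eval_map_algebraMap,
    Polynomial.aeval_eq_smeval]

theorem binomC_comp_mem_polyFun {g : ℂ → ℂ} (hg : g ∈ polyFun ℂ) (k : ℕ) :
    (fun t => binomC (g t) k) ∈ polyFun ℂ := by
  have : (fun t => binomC (g t) k) =
      fun t => (Polynomial.C (k.factorial : ℂ)⁻¹ * descPochhammer ℂ k).eval (g t) := by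
    funext t
    simp [binomC, descPochhammer_eval_eq_prod_range, div_eq_inv_mul]
  exact this ▸ eval_comp_mem_polyFun _ hg

theorem binomC_sub_one_add_succ (a : ℂ) (m : ℕ) :
    binomC (a - 1 + (m + 1 : ℕ)) (m + 1) = binomC (a + (m + 1 : ℕ)) (m + 1) - binomC (a + m) m := by
  simp only [binomC_eq_choose, Nat.cast_add, Nat.cast_one]
  rw [show a + (m + 1) = a + m + 1 by ring, Ring.choose_succ_succ,
    show a - 1 + (m + 1) = a + m by ring]
  ring

section Cpow

open MvPowerSeries

variable {σ : Type*}

theorem MvPowerSeries.coeff_pow_eq_zero_of_degree_lt {R : Type*} [Semiring R]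
    {f : MvPowerSeries σ R} (hf : constantCoeff f = 0) {k : ℕ} {N : σ →₀ ℕ}
    (h : N.degree < k) : coeff N (f ^ k) = 0 :=
  coeff_of_lt_order <| (by exact_mod_cast h : (N.degree : ℕ∞) < k).trans_le
    (le_order_pow_of_constantCoeff_eq_zero k hf)

theorem coeff_cpow (f : MvPowerSeries σ ℂ) (α : ℂ) (N : σ →₀ ℕ) :
    coeff N (cpow f α) =
      ∑ k ∈ Finset.range (N.degree + 1), binomC α k * coeff N ((f - 1) ^ k) := rfl

theorem cpow_comp_mem_polyCoeffFamilies (f : MvPowerSeries σ ℂ) {g : ℂ → ℂ}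
    (hg : g ∈ polyFun ℂ) : (fun t => cpow f (g t)) ∈ polyCoeffFamilies σ ℂ := fun N => by
  simp only [coeff_cpow]
  rw [← Finset.sum_fn]
  exact sum_mem fun k _ => mul_mem (binomC_comp_mem_polyFun hg k) (const_mem_polyFun _)

variable {f : MvPowerSeries σ ℂ}

theorem coeff_cpow_of_degree_le (hf : constantCoeff f = 1) (α : ℂ) {N : σ →₀ ℕ} {m : ℕ}
    (hm : N.degree ≤ m) :
    coeff N (cpow f α) = ∑ k ∈ Finset.range (m + 1), binomC α k * coeff N ((f - 1) ^ k) := by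
  rw [coeff_cpow]
  refine Finset.sum_subset (Finset.range_subset_range.mpr (by omega)) fun k hk hk' => ?_
  have : N.degree < k := by simp only [Finset.mem_range] at hk hk'; omega
  rw [coeff_pow_eq_zero_of_degree_lt (by simp [hf]) this, mul_zero]

theorem cpow_natCast (hf : constantCoeff f = 1) (n : ℕ) : cpow f n = f ^ n := by
  classical
  ext N
  have hpow : f ^ n = ∑ k ∈ Finset.range (n + 1), C (n.choose k : ℂ) * (f - 1) ^ k := by
    conv_lhs => rw [← sub_add_cancel f 1, add_pow]
    simp [mul_comm]
  rw [coeff_cpow_of_degree_le hf _ (le_max_left N.degree n), hpow, map_sum,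
    ← Finset.sum_subset (Finset.range_subset_range.mpr (by omega : n + 1 ≤ max N.degree n + 1))]
  · exact Finset.sum_congr rfl fun k _ => by
      rw [coeff_C_mul, binomC_eq_choose, Ring.choose_natCast]
  · intro k hk hk'
    simp only [Finset.mem_range] at hk hk'
    rw [binomC_eq_choose, Ring.choose_natCast, Nat.choose_eq_zero_of_lt (by omega),
      Nat.cast_zero, zero_mul]

theorem cpow_zero (hf : constantCoeff f = 1) : cpow f 0 = 1 := by
  simpa using cpow_natCast hf 0

/-- Both sides are polynomial in each exponent, so the law extends from `cpow_natCast`. -/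
theorem cpow_add (hf : constantCoeff f = 1) (α β : ℂ) :
    cpow f (α + β) = cpow f α * cpow f β := by
  have hnat (a b : ℕ) : cpow f (a + b) = cpow f a * cpow f b := by
    rw [← Nat.cast_add, cpow_natCast hf, cpow_natCast hf, cpow_natCast hf, pow_add]
  have hnat_right (b : ℕ) (α : ℂ) : cpow f (α + b) = cpow f α * cpow f b :=
    congrFun (polyCoeffFamilies_eq_of_natCast (F := fun t => cpow f (t + b))
      (cpow_comp_mem_polyCoeffFamilies f (add_mem id_mem_polyFun (const_mem_polyFun _)))
      (mul_mem (cpow_comp_mem_polyCoeffFamilies f id_mem_polyFun)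
        (const_mem_polyCoeffFamilies _))
      fun a => hnat a b) α
  exact congrFun (polyCoeffFamilies_eq_of_natCast (F := fun t => cpow f (α + t))
    (cpow_comp_mem_polyCoeffFamilies f (add_mem (const_mem_polyFun α) id_mem_polyFun))
    (mul_mem (const_mem_polyCoeffFamilies _) (cpow_comp_mem_polyCoeffFamilies f id_mem_polyFun))
    fun b => hnat_right b α) β

end Cpow

section Kfin

open MvPowerSeries Matrix

variable {H : Type*} [Fintype H] [DecidableEq H] (D G : Matrix H H ℂ)

theorem Pfin_add (μ w : H → ℂ) (N : H →₀ ℕ) (k : H) :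
    Pfin D G (μ + w) N k = Pfin D G μ N k - (w ᵥ* D⁻¹) k := by
  simp only [Pfin, Pi.add_apply, add_mul, Finset.sum_add_distrib, vecMul, dotProduct]
  ring

theorem Pfin_add_row (hD : IsUnit D) (ν : H → ℂ) (N : H →₀ ℕ) (i k : H) :
    Pfin D G (ν + D i) N k = Pfin D G ν N k - (1 : Matrix H H ℂ) i k := by
  rw [Pfin_add, ← Matrix.mul_nonsing_inv D ((Matrix.isUnit_iff_isUnit_det D).mp hD)]
  rfl

theorem Pfin_sub_single (ν : H → ℂ) {N : H →₀ ℕ} {i : H} (hi : Finsupp.single i 1 ≤ N)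
    (k : H) : Pfin D G ν (N - Finsupp.single i 1) k = Pfin D G ν N k + (G * D⁻¹) i k := by
  have hN (j : H) :
      ((N - Finsupp.single i 1 : H →₀ ℕ) j : ℂ) = N j - (1 : Matrix H H ℂ) i j := by
    rw [Finsupp.tsub_apply, Nat.cast_sub (hi j), Matrix.one_apply, Finsupp.single_apply]
    split_ifs <;> simp
  simp only [Pfin, hN, sub_mul, Finset.sum_sub_distrib, Matrix.one_apply, ite_mul, one_mul,
    zero_mul, Finset.sum_ite_eq, Finset.mem_univ, if_true]
  ring

theorem Pfin_add_row_sub_single (ν : H → ℂ) {N : H →₀ ℕ} {i : H}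
    (hi : Finsupp.single i 1 ≤ N) (k : H) :
    Pfin D G (ν + G i) (N - Finsupp.single i 1) k = Pfin D G ν N k := by
  rw [Pfin_add, Pfin_sub_single D G ν hi]
  exact add_sub_cancel_right _ _

theorem coeff_Kfin (ν : H → ℂ) (N : H →₀ ℕ) :
    coeff N (Kfin D G ν) = ∏ k, binomC (Pfin D G ν N k + N k) (N k) :=
  Finset.prod_subset (Finset.subset_univ _) fun k _ hk => by
    simp [Finsupp.notMem_support_iff.mp hk, binomC]

theorem Kfin_add_row (hD : IsUnit D) (ν : H → ℂ) (i : H) :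
    Kfin D G (ν + D i) = Kfin D G ν - X i * Kfin D G (ν + G i) := by
  ext N
  have hoff : ∀ k ∈ Finset.univ.erase i,
      binomC (Pfin D G (ν + D i) N k + N k) (N k) = binomC (Pfin D G ν N k + N k) (N k) :=
    fun k hk => by
      rw [Pfin_add_row D G hD, one_apply_ne (Finset.ne_of_mem_erase hk).symm, sub_zero]
  rw [map_sub, MvPowerSeries.coeff_X_mul, coeff_Kfin, coeff_Kfin,
    ← Finset.mul_prod_erase _ _ (Finset.mem_univ i), Finset.prod_congr rfl hoff,
    ← Finset.mul_prod_erase _ _ (Finset.mem_univ i), Pfin_add_row D G hD, one_apply_eq]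
  split_ifs with hi
  · set N' := N - Finsupp.single i 1
    have hN'i : N i = N' i + 1 := by
      simp [N', Nat.sub_add_cancel (Finsupp.single_le_iff.mp hi)]
    have hoff' : ∀ k ∈ Finset.univ.erase i,
        binomC (Pfin D G (ν + G i) N' k + N' k) (N' k) = binomC (Pfin D G ν N k + N k) (N k) :=
      fun k hk => by
        rw [Pfin_add_row_sub_single D G ν hi, show N' k = N k by
          simp [N', (Finset.ne_of_mem_erase hk).symm]]
    rw [coeff_Kfin, ← Finset.mul_prod_erase _ _ (Finset.mem_univ i), Finset.prod_congr rfl hoff',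
      Pfin_add_row_sub_single D G ν hi, ← sub_mul, hN'i, binomC_sub_one_add_succ]
  · have hi0 : N i = 0 := by simpa [Finsupp.single_le_iff] using hi
    simp [hi0, binomC]

theorem Kfin_add_smul_mem_polyCoeffFamilies (μ v : H → ℂ) :
    (fun t : ℂ => Kfin D G (μ + t • v)) ∈ polyCoeffFamilies H ℂ := fun N => by
  simp only [coeff_Kfin, Pfin_add, smul_vecMul, Pi.smul_apply, smul_eq_mul]
  rw [← Finset.prod_fn]
  exact prod_mem fun k _ => binomC_comp_mem_polyFun
    (add_mem (sub_mem (const_mem_polyFun _) (mul_mem id_mem_polyFun (const_mem_polyFun _)))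
      (const_mem_polyFun _)) _

end Kfin

/-- Let `(Q_i)` be the unique solution of the finite `Q`-system for
matrices `D, G` with `det D ≠ 0`, and for `ν ∈ ℂ^H` set `Q^ν = ∏_i Q_i^{ν_i}`.
Then `Q^ν_{D,G}(w) · K^0_{D,G}(w) = K^ν_{D,G}(w)`. -/
theorem statement2 {H : Type*} [Fintype H] [DecidableEq H]
    (D G : Matrix H H ℂ) (hD : D.det ≠ 0)
    (Q : H → MvPowerSeries H ℂ)
    (hQ1 : ∀ i, MvPowerSeries.constantCoeff (Q i) = 1)
    (hQ2 : ∀ i, (∏ j, cpow (Q j) (D i j)) +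
      MvPowerSeries.X i * ∏ j, cpow (Q j) (G i j) = 1)
    (ν : H → ℂ) :
    (∏ i, cpow (Q i) (ν i)) * Kfin D G 0 = Kfin D G ν := by
  have hDu : IsUnit D := (Matrix.isUnit_iff_isUnit_det D).mpr hD.isUnit
  have hprod (μ w : H → ℂ) :
      ∏ i, cpow (Q i) ((μ + w) i) = (∏ i, cpow (Q i) (μ i)) * ∏ i, cpow (Q i) (w i) := by
    simp only [Pi.add_apply, cpow_add (hQ1 _), Finset.prod_mul_distrib]
  let E (μ : H → ℂ) : MvPowerSeries H ℂ := (∏ i, cpow (Q i) (μ i)) * Kfin D G 0 - Kfin D G μ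
  have hrec (μ : H → ℂ) (i : H) : E (μ + D i) = E μ - MvPowerSeries.X i * E (μ + G i) := by
    simp only [E, hprod, Kfin_add_row D G hDu, eq_sub_of_add_eq (hQ2 i)]
    ring
  have hline (μ v : H → ℂ) : (fun t : ℂ => E (μ + t • v)) ∈ polyCoeffFamilies H ℂ := by
    refine sub_mem (mul_mem ?_ (const_mem_polyCoeffFamilies _))
      (Kfin_add_smul_mem_polyCoeffFamilies D G μ v)
    rw [← Finset.prod_fn]
    exact prod_mem fun i _ =>
      cpow_comp_mem_polyCoeffFamilies (Q i) (affine_mem_polyFun (μ i) (v i))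
  have h0 : E 0 = 0 := by simp [E, cpow_zero (hQ1 _)]
  simpa [E, sub_eq_zero] using congrFun (eq_zero_of_add_row_eq_sub_X_mul hDu hrec hline h0) ν
end
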